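/- arXiv:1807.05425 — 2 statements merged into one kernel-verified Lean document; each statement's English description precedes it below -/
import Mathlib

section
/- There exists a scalar function P(t,x) such that v(t,x) = (a x₁/(T*-t) + k x₂/(x₁²+x₂²), a x₂/(T*-t) - k x₁/(x₁²+x₂²), -2a x₃/(T*-t)) satisfies the incompressible Navier-Stokes equations ∂ₜv + (v·∇)v = -∇P + ν Δv at every point (t,x) with t ∈ [0,T*) and (x₁,x₂) ≠ (0,0). Explicitly one may take P(t,x) = -½(a²+a)(x₁²+x₂²)/(T*-t)² - k²/(2(x₁²+x₂²)) - ½(4a²-2a)x₃²/(T*-t)². -/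
open MeasureTheory Filter

noncomputable section

/-- The partial derivative in the `j`-th spatial coordinate. -/
def pd (j : Fin 3) (f : (Fin 3 → ℝ) → ℝ) (x : Fin 3 → ℝ) : ℝ :=
  deriv (fun s => f (Function.update x j s)) (x j)

/-- The smooth explicit blowup velocity field. -/
def V (T a k t : ℝ) (x : Fin 3 → ℝ) : Fin 3 → ℝ :=
  ![a * x 0 / (T - t) + k * x 1 * (T - t) ^ (2 * a),
    a * x 1 / (T - t) - k * x 0 * (T - t) ^ (2 * a),
    -2 * a * x 2 / (T - t)]

/-- The singular explicit blowup velocity field. -/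
def W (T a k t : ℝ) (x : Fin 3 → ℝ) : Fin 3 → ℝ :=
  ![a * x 0 / (T - t) + k * x 1 / ((x 0) ^ 2 + (x 1) ^ 2),
    a * x 1 / (T - t) - k * x 0 / ((x 0) ^ 2 + (x 1) ^ 2),
    -2 * a * x 2 / (T - t)]

lemma pd_eq {j : Fin 3} {f : (Fin 3 → ℝ) → ℝ} {x : Fin 3 → ℝ} {g : ℝ → ℝ} {d : ℝ}
    (hg : ∀ s, f (Function.update x j s) = g s) (hd : HasDerivAt g d (x j)) :
    pd j f x = d := by
  unfold pd
  have h : (fun s => f (Function.update x j s)) = g := funext hg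
  rw [h]; exact hd.deriv

lemma pd_eq_nhds {j : Fin 3} {f : (Fin 3 → ℝ) → ℝ} {x : Fin 3 → ℝ} {g : ℝ → ℝ} {d : ℝ}
    (hg : ∀ᶠ s in nhds (x j), f (Function.update x j s) = g s) (hd : HasDerivAt g d (x j)) :
    pd j f x = d := by
  unfold pd
  rw [Filter.EventuallyEq.deriv_eq hg]
  exact hd.deriv

lemma hdA (c r s : ℝ) : HasDerivAt (fun s : ℝ => c * s / r) (c / r) s := by
  simpa using ((hasDerivAt_id s).const_mul c).div_const r

lemma hdB (c b s : ℝ) (h : s ^ 2 + b ≠ 0) :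
    HasDerivAt (fun s : ℝ => c / (s ^ 2 + b)) (-(c * (2 * s)) / (s ^ 2 + b) ^ 2) s := by
  have h2 := (hasDerivAt_const s c).fun_div ((hasDerivAt_pow 2 s).add_const b) h
  refine (h2).congr_deriv ?_
  ring

lemma hdB' (c b s : ℝ) (h : b + s ^ 2 ≠ 0) :
    HasDerivAt (fun s : ℝ => c / (b + s ^ 2)) (-(c * (2 * s)) / (b + s ^ 2) ^ 2) s := by
  have h2 := (hasDerivAt_const s c).fun_div ((hasDerivAt_pow 2 s).const_add b) h
  refine (h2).congr_deriv ?_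
  ring

lemma hdC (c b s : ℝ) (h : s ^ 2 + b ≠ 0) :
    HasDerivAt (fun s : ℝ => c * s / (s ^ 2 + b))
      ((c * (s ^ 2 + b) - c * s * (2 * s)) / (s ^ 2 + b) ^ 2) s := by
  have h2 := ((hasDerivAt_id s).const_mul c).fun_div ((hasDerivAt_pow 2 s).add_const b) h
  refine (h2).congr_deriv ?_
  simp [id]

lemma hdC' (c b s : ℝ) (h : b + s ^ 2 ≠ 0) :
    HasDerivAt (fun s : ℝ => c * s / (b + s ^ 2))
      ((c * (b + s ^ 2) - c * s * (2 * s)) / (b + s ^ 2) ^ 2) s := by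
  have h2 := ((hasDerivAt_id s).const_mul c).fun_div ((hasDerivAt_pow 2 s).const_add b) h
  refine (h2).congr_deriv ?_
  simp [id]

lemma hdT (c T t : ℝ) (h : T - t ≠ 0) :
    HasDerivAt (fun τ : ℝ => c / (T - τ)) (c / (T - t) ^ 2) t := by
  have h2 := (hasDerivAt_const t c).fun_div ((hasDerivAt_id t).const_sub T) h
  refine (h2).congr_deriv ?_
  simp only [id]
  field_simp
  ring

lemma hdE (c b s : ℝ) (h : s ^ 2 + b ≠ 0) :
    HasDerivAt (fun s : ℝ => c * s / (s ^ 2 + b) ^ 2) (c * (b - 3 * s ^ 2) / (s ^ 2 + b) ^ 3) s := by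
  have h2 := ((hasDerivAt_id s).const_mul c).fun_div
    (((hasDerivAt_pow 2 s).add_const b).fun_pow 2) (pow_ne_zero 2 h)
  refine (h2).congr_deriv ?_
  simp only [id]
  field_simp
  ring

lemma hdE' (c b s : ℝ) (h : b + s ^ 2 ≠ 0) :
    HasDerivAt (fun s : ℝ => c * s / (b + s ^ 2) ^ 2) (c * (b - 3 * s ^ 2) / (b + s ^ 2) ^ 3) s := by
  have h2 := ((hasDerivAt_id s).const_mul c).fun_div
    (((hasDerivAt_pow 2 s).const_add b).fun_pow 2) (pow_ne_zero 2 h)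
  refine (h2).congr_deriv ?_
  simp only [id]
  field_simp
  ring

lemma hdF (c₁ c₂ b s : ℝ) (h : s ^ 2 + b ≠ 0) :
    HasDerivAt (fun s : ℝ => (c₁ + c₂ * s ^ 2) / (s ^ 2 + b) ^ 2)
      (2 * s * (c₂ * b - 2 * c₁ - c₂ * s ^ 2) / (s ^ 2 + b) ^ 3) s := by
  have h2 := ((hasDerivAt_pow 2 s).const_mul c₂).const_add c₁ |>.fun_div
    (((hasDerivAt_pow 2 s).add_const b).fun_pow 2) (pow_ne_zero 2 h)
  refine (h2).congr_deriv ?_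
  field_simp
  ring

lemma hdF' (c₁ c₂ b s : ℝ) (h : b + s ^ 2 ≠ 0) :
    HasDerivAt (fun s : ℝ => (c₁ + c₂ * s ^ 2) / (b + s ^ 2) ^ 2)
      (2 * s * (c₂ * b - 2 * c₁ - c₂ * s ^ 2) / (b + s ^ 2) ^ 3) s := by
  have h2 := ((hasDerivAt_pow 2 s).const_mul c₂).const_add c₁ |>.fun_div
    (((hasDerivAt_pow 2 s).const_add b).fun_pow 2) (pow_ne_zero 2 h)
  refine (h2).congr_deriv ?_
  field_simp
  ring
set_option maxHeartbeats 2000000 in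
/-- The singular family solves the incompressible Navier–Stokes equations with
the explicit pressure P, away from the x₃-axis. -/
theorem stmt_3 (T ν a k : ℝ) (hT : 0 < T) (hν : 0 < ν) (ha : a ≠ 0) (hk : k ≠ 0) :
    ∃ P : ℝ → (Fin 3 → ℝ) → ℝ,
      (∀ t : ℝ, ∀ x : Fin 3 → ℝ, ¬ (x 0 = 0 ∧ x 1 = 0) →
        P t x = -(1 / 2) * (a ^ 2 + a) * ((x 0) ^ 2 + (x 1) ^ 2) / (T - t) ^ 2
          - k ^ 2 / (2 * ((x 0) ^ 2 + (x 1) ^ 2))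
          - (1 / 2) * (4 * a ^ 2 - 2 * a) * (x 2) ^ 2 / (T - t) ^ 2) ∧
      ∀ t : ℝ, 0 ≤ t → t < T → ∀ x : Fin 3 → ℝ, ¬ (x 0 = 0 ∧ x 1 = 0) → ∀ i : Fin 3,
        deriv (fun τ => W T a k τ x i) t
          + ∑ j : Fin 3, W T a k t x j * pd j (fun y => W T a k t y i) x
        = - pd i (P t) x
          + ν * ∑ j : Fin 3, pd j (fun y => pd j (fun y' => W T a k t y' i) y) x := by
  refine ⟨fun t x => -(1 / 2) * (a ^ 2 + a) * ((x 0) ^ 2 + (x 1) ^ 2) / (T - t) ^ 2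
          - k ^ 2 / (2 * ((x 0) ^ 2 + (x 1) ^ 2))
          - (1 / 2) * (4 * a ^ 2 - 2 * a) * (x 2) ^ 2 / (T - t) ^ 2,
    fun t x _ => rfl, ?_⟩
  intro t ht htT x hx i
  have hr : T - t ≠ 0 := sub_ne_zero.2 (ne_of_gt htT)
  have hq : x 0 ^ 2 + x 1 ^ 2 ≠ 0 := by
    intro hsum
    apply hx
    constructor
    · have h0 : x 0 ^ 2 = 0 := by nlinarith [sq_nonneg (x 0), sq_nonneg (x 1)]
      exact pow_eq_zero_iff (two_ne_zero) |>.mp h0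
    · have h1 : x 1 ^ 2 = 0 := by nlinarith [sq_nonneg (x 0), sq_nonneg (x 1)]
      exact pow_eq_zero_iff (two_ne_zero) |>.mp h1
  have hi : i = 0 ∨ i = 1 ∨ i = 2 := by omega
  rcases hi with hi | hi | hi <;> subst hi
  · simp only [W, Matrix.cons_val_zero, Matrix.cons_val_one,
      Matrix.head_cons, Fin.sum_univ_three, Matrix.cons_val_two, Matrix.tail_cons]
    have hev0 : ∀ᶠ s in nhds (x 0), s ^ 2 + x 1 ^ 2 ≠ 0 := by
      have hc : ContinuousAt (fun s : ℝ => s ^ 2 + x 1 ^ 2) (x 0) := by fun_prop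
      exact hc.eventually_ne hq
    have hev1 : ∀ᶠ s in nhds (x 1), x 0 ^ 2 + s ^ 2 ≠ 0 := by
      have hc : ContinuousAt (fun s : ℝ => x 0 ^ 2 + s ^ 2) (x 1) := by fun_prop
      exact hc.eventually_ne hq
    have hT0 : deriv (fun τ => a * x 0 / (T - τ) + k * x 1 / (x 0 ^ 2 + x 1 ^ 2)) t
        = a * x 0 / (T - t) ^ 2 :=
      ((hdT (a * x 0) T t hr).add_const (k * x 1 / (x 0 ^ 2 + x 1 ^ 2))).deriv
    have h00 : pd 0 (fun y => a * y 0 / (T - t) + k * y 1 / (y 0 ^ 2 + y 1 ^ 2)) x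
        = a / (T - t) + -2 * k * x 1 * x 0 / (x 0 ^ 2 + x 1 ^ 2) ^ 2 := by
      refine pd_eq (g := fun s => a * s / (T - t) + k * x 1 / (s ^ 2 + x 1 ^ 2))
        (fun s => by simp [Function.update_apply]) ?_
      refine ((hdA a (T - t) (x 0)).fun_add (hdB (k * x 1) (x 1 ^ 2) (x 0) hq)).congr_deriv ?_
      ring
    have h01 : pd 1 (fun y => a * y 0 / (T - t) + k * y 1 / (y 0 ^ 2 + y 1 ^ 2)) x
        = (k * x 0 ^ 2 + -k * x 1 ^ 2) / (x 0 ^ 2 + x 1 ^ 2) ^ 2 := by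
      refine pd_eq (g := fun s => a * x 0 / (T - t) + k * s / (x 0 ^ 2 + s ^ 2))
        (fun s => by simp [Function.update_apply]) ?_
      refine ((hdC' k (x 0 ^ 2) (x 1) hq).const_add (a * x 0 / (T - t))).congr_deriv ?_
      ring
    have h02 : pd 2 (fun y => a * y 0 / (T - t) + k * y 1 / (y 0 ^ 2 + y 1 ^ 2)) x = 0 :=
      pd_eq (g := fun _ => a * x 0 / (T - t) + k * x 1 / (x 0 ^ 2 + x 1 ^ 2))
        (fun s => by simp [Function.update_apply]) (hasDerivAt_const _ _)
    have hP0 : pd 0 (fun x => -(1 / 2) * (a ^ 2 + a) * (x 0 ^ 2 + x 1 ^ 2) / (T - t) ^ 2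
          - k ^ 2 / (2 * (x 0 ^ 2 + x 1 ^ 2))
          - 1 / 2 * (4 * a ^ 2 - 2 * a) * x 2 ^ 2 / (T - t) ^ 2) x
        = -(a ^ 2 + a) * x 0 / (T - t) ^ 2 + k ^ 2 * x 0 / (x 0 ^ 2 + x 1 ^ 2) ^ 2 := by
      refine pd_eq (g := fun s => -(1 / 2) * (a ^ 2 + a) * (s ^ 2 + x 1 ^ 2) / (T - t) ^ 2
          - k ^ 2 / (2 * (s ^ 2 + x 1 ^ 2))
          - 1 / 2 * (4 * a ^ 2 - 2 * a) * x 2 ^ 2 / (T - t) ^ 2)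
        (fun s => by simp [Function.update_apply]) ?_
      have t1 := (((hasDerivAt_pow 2 (x 0)).add_const (x 1 ^ 2)).const_mul
        (-(1 / 2) * (a ^ 2 + a))).div_const ((T - t) ^ 2)
      have t2 := (hasDerivAt_const (x 0) (k ^ 2)).fun_div
        (((hasDerivAt_pow 2 (x 0)).add_const (x 1 ^ 2)).const_mul 2) (mul_ne_zero two_ne_zero hq)
      refine ((t1.fun_sub t2).sub_const (1 / 2 * (4 * a ^ 2 - 2 * a) * x 2 ^ 2 / (T - t) ^ 2)).congr_deriv ?_
      field_simp
      ring
    have K00 : ∀ s : ℝ, s ^ 2 + x 1 ^ 2 ≠ 0 →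
        pd 0 (fun y => a * y 0 / (T - t) + k * y 1 / (y 0 ^ 2 + y 1 ^ 2)) (Function.update x 0 s)
          = a / (T - t) + -2 * k * x 1 * s / (s ^ 2 + x 1 ^ 2) ^ 2 := by
      intro s hs
      have hpt : Function.update x 0 s 0 = s := by simp
      refine pd_eq (g := fun u => a * u / (T - t) + k * x 1 / (u ^ 2 + x 1 ^ 2))
        (fun u => by simp [Function.update_apply]) ?_
      rw [hpt]
      refine ((hdA a (T - t) s).fun_add (hdB (k * x 1) (x 1 ^ 2) s hs)).congr_deriv ?_
      ring
    have K01 : ∀ s : ℝ, x 0 ^ 2 + s ^ 2 ≠ 0 →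
        pd 1 (fun y => a * y 0 / (T - t) + k * y 1 / (y 0 ^ 2 + y 1 ^ 2)) (Function.update x 1 s)
          = (k * x 0 ^ 2 + -k * s ^ 2) / (x 0 ^ 2 + s ^ 2) ^ 2 := by
      intro s hs
      have hpt : Function.update x 1 s 1 = s := by simp
      refine pd_eq (g := fun u => a * x 0 / (T - t) + k * u / (x 0 ^ 2 + u ^ 2))
        (fun u => by simp [Function.update_apply]) ?_
      rw [hpt]
      refine ((hdC' k (x 0 ^ 2) s hs).const_add (a * x 0 / (T - t))).congr_deriv ?_
      ring
    have hL00 : pd 0 (fun y =>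
          pd 0 (fun y => a * y 0 / (T - t) + k * y 1 / (y 0 ^ 2 + y 1 ^ 2)) y) x
        = -2 * k * x 1 * (x 1 ^ 2 - 3 * x 0 ^ 2) / (x 0 ^ 2 + x 1 ^ 2) ^ 3 := by
      refine pd_eq_nhds (g := fun s => a / (T - t) + -2 * k * x 1 * s / (s ^ 2 + x 1 ^ 2) ^ 2)
        ?_ ((hdE (-2 * k * x 1) (x 1 ^ 2) (x 0) hq).const_add (a / (T - t)))
      filter_upwards [hev0] with s hs
      exact K00 s hs
    have hL01 : pd 1 (fun y =>
          pd 1 (fun y => a * y 0 / (T - t) + k * y 1 / (y 0 ^ 2 + y 1 ^ 2)) y) x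
        = 2 * k * x 1 * (x 1 ^ 2 - 3 * x 0 ^ 2) / (x 0 ^ 2 + x 1 ^ 2) ^ 3 := by
      refine pd_eq_nhds (g := fun s => (k * x 0 ^ 2 + -k * s ^ 2) / (x 0 ^ 2 + s ^ 2) ^ 2) ?_ ?_
      · filter_upwards [hev1] with s hs
        exact K01 s hs
      · convert hdF' (k * x 0 ^ 2) (-k) (x 0 ^ 2) (x 1) hq using 1
        ring
    have hL02 : pd 2 (fun y =>
          pd 2 (fun y => a * y 0 / (T - t) + k * y 1 / (y 0 ^ 2 + y 1 ^ 2)) y) x = 0 := by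
      have K02 : ∀ y : Fin 3 → ℝ,
          pd 2 (fun y => a * y 0 / (T - t) + k * y 1 / (y 0 ^ 2 + y 1 ^ 2)) y = 0 := fun y =>
        pd_eq (g := fun _ => a * y 0 / (T - t) + k * y 1 / (y 0 ^ 2 + y 1 ^ 2))
          (fun s => by simp [Function.update_apply]) (hasDerivAt_const _ _)
      exact pd_eq (g := fun _ => (0 : ℝ)) (fun s => K02 _) (hasDerivAt_const _ _)
    rw [hT0, h00, h01, h02, hP0, hL00, hL01, hL02]
    field_simp
    ring

  · simp only [W, Matrix.cons_val_zero, Matrix.cons_val_one,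
      Matrix.head_cons, Fin.sum_univ_three, Matrix.cons_val_two, Matrix.tail_cons]
    have hev0 : ∀ᶠ s in nhds (x 0), s ^ 2 + x 1 ^ 2 ≠ 0 := by
      have hc : ContinuousAt (fun s : ℝ => s ^ 2 + x 1 ^ 2) (x 0) := by fun_prop
      exact hc.eventually_ne hq
    have hev1 : ∀ᶠ s in nhds (x 1), x 0 ^ 2 + s ^ 2 ≠ 0 := by
      have hc : ContinuousAt (fun s : ℝ => x 0 ^ 2 + s ^ 2) (x 1) := by fun_prop
      exact hc.eventually_ne hq
    have hT1 : deriv (fun τ => a * x 1 / (T - τ) - k * x 0 / (x 0 ^ 2 + x 1 ^ 2)) t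
        = a * x 1 / (T - t) ^ 2 :=
      ((hdT (a * x 1) T t hr).sub_const (k * x 0 / (x 0 ^ 2 + x 1 ^ 2))).deriv
    have h10 : pd 0 (fun y => a * y 1 / (T - t) - k * y 0 / (y 0 ^ 2 + y 1 ^ 2)) x
        = (-(k * x 1 ^ 2) + k * x 0 ^ 2) / (x 0 ^ 2 + x 1 ^ 2) ^ 2 := by
      refine pd_eq (g := fun s => a * x 1 / (T - t) - k * s / (s ^ 2 + x 1 ^ 2))
        (fun s => by simp [Function.update_apply]) ?_
      refine ((hdC k (x 1 ^ 2) (x 0) hq).const_sub (a * x 1 / (T - t))).congr_deriv ?_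
      ring
    have h11 : pd 1 (fun y => a * y 1 / (T - t) - k * y 0 / (y 0 ^ 2 + y 1 ^ 2)) x
        = a / (T - t) + 2 * k * x 0 * x 1 / (x 0 ^ 2 + x 1 ^ 2) ^ 2 := by
      refine pd_eq (g := fun s => a * s / (T - t) - k * x 0 / (x 0 ^ 2 + s ^ 2))
        (fun s => by simp [Function.update_apply]) ?_
      refine ((hdA a (T - t) (x 1)).fun_sub (hdB' (k * x 0) (x 0 ^ 2) (x 1) hq)).congr_deriv ?_
      ring
    have h12 : pd 2 (fun y => a * y 1 / (T - t) - k * y 0 / (y 0 ^ 2 + y 1 ^ 2)) x = 0 :=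
      pd_eq (g := fun _ => a * x 1 / (T - t) - k * x 0 / (x 0 ^ 2 + x 1 ^ 2))
        (fun s => by simp [Function.update_apply]) (hasDerivAt_const _ _)
    have hP1 : pd 1 (fun x => -(1 / 2) * (a ^ 2 + a) * (x 0 ^ 2 + x 1 ^ 2) / (T - t) ^ 2
          - k ^ 2 / (2 * (x 0 ^ 2 + x 1 ^ 2))
          - 1 / 2 * (4 * a ^ 2 - 2 * a) * x 2 ^ 2 / (T - t) ^ 2) x
        = -(a ^ 2 + a) * x 1 / (T - t) ^ 2 + k ^ 2 * x 1 / (x 0 ^ 2 + x 1 ^ 2) ^ 2 := by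
      refine pd_eq (g := fun s => -(1 / 2) * (a ^ 2 + a) * (x 0 ^ 2 + s ^ 2) / (T - t) ^ 2
          - k ^ 2 / (2 * (x 0 ^ 2 + s ^ 2))
          - 1 / 2 * (4 * a ^ 2 - 2 * a) * x 2 ^ 2 / (T - t) ^ 2)
        (fun s => by simp [Function.update_apply]) ?_
      have t1 := (((hasDerivAt_pow 2 (x 1)).const_add (x 0 ^ 2)).const_mul
        (-(1 / 2) * (a ^ 2 + a))).div_const ((T - t) ^ 2)
      have t2 := (hasDerivAt_const (x 1) (k ^ 2)).fun_div
        (((hasDerivAt_pow 2 (x 1)).const_add (x 0 ^ 2)).const_mul 2) (mul_ne_zero two_ne_zero hq)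
      refine ((t1.fun_sub t2).sub_const (1 / 2 * (4 * a ^ 2 - 2 * a) * x 2 ^ 2 / (T - t) ^ 2)).congr_deriv ?_
      field_simp
      ring
    have K10 : ∀ s : ℝ, s ^ 2 + x 1 ^ 2 ≠ 0 →
        pd 0 (fun y => a * y 1 / (T - t) - k * y 0 / (y 0 ^ 2 + y 1 ^ 2)) (Function.update x 0 s)
          = (-(k * x 1 ^ 2) + k * s ^ 2) / (s ^ 2 + x 1 ^ 2) ^ 2 := by
      intro s hs
      have hpt : Function.update x 0 s 0 = s := by simp
      refine pd_eq (g := fun u => a * x 1 / (T - t) - k * u / (u ^ 2 + x 1 ^ 2))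
        (fun u => by simp [Function.update_apply]) ?_
      rw [hpt]
      refine ((hdC k (x 1 ^ 2) s hs).const_sub (a * x 1 / (T - t))).congr_deriv ?_
      ring
    have K11 : ∀ s : ℝ, x 0 ^ 2 + s ^ 2 ≠ 0 →
        pd 1 (fun y => a * y 1 / (T - t) - k * y 0 / (y 0 ^ 2 + y 1 ^ 2)) (Function.update x 1 s)
          = a / (T - t) + 2 * k * x 0 * s / (x 0 ^ 2 + s ^ 2) ^ 2 := by
      intro s hs
      have hpt : Function.update x 1 s 1 = s := by simp
      refine pd_eq (g := fun u => a * u / (T - t) - k * x 0 / (x 0 ^ 2 + u ^ 2))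
        (fun u => by simp [Function.update_apply]) ?_
      rw [hpt]
      refine ((hdA a (T - t) s).fun_sub (hdB' (k * x 0) (x 0 ^ 2) s hs)).congr_deriv ?_
      ring
    have hL10 : pd 0 (fun y =>
          pd 0 (fun y => a * y 1 / (T - t) - k * y 0 / (y 0 ^ 2 + y 1 ^ 2)) y) x
        = 2 * k * x 0 * (3 * x 1 ^ 2 - x 0 ^ 2) / (x 0 ^ 2 + x 1 ^ 2) ^ 3 := by
      refine pd_eq_nhds (g := fun s => (-(k * x 1 ^ 2) + k * s ^ 2) / (s ^ 2 + x 1 ^ 2) ^ 2) ?_ ?_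
      · filter_upwards [hev0] with s hs
        exact K10 s hs
      · convert hdF (-(k * x 1 ^ 2)) k (x 1 ^ 2) (x 0) hq using 1
        ring
    have hL11 : pd 1 (fun y =>
          pd 1 (fun y => a * y 1 / (T - t) - k * y 0 / (y 0 ^ 2 + y 1 ^ 2)) y) x
        = 2 * k * x 0 * (x 0 ^ 2 - 3 * x 1 ^ 2) / (x 0 ^ 2 + x 1 ^ 2) ^ 3 := by
      refine pd_eq_nhds (g := fun s => a / (T - t) + 2 * k * x 0 * s / (x 0 ^ 2 + s ^ 2) ^ 2)
        ?_ ((hdE' (2 * k * x 0) (x 0 ^ 2) (x 1) hq).const_add (a / (T - t)))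
      filter_upwards [hev1] with s hs
      exact K11 s hs
    have hL12 : pd 2 (fun y =>
          pd 2 (fun y => a * y 1 / (T - t) - k * y 0 / (y 0 ^ 2 + y 1 ^ 2)) y) x = 0 := by
      have K12 : ∀ y : Fin 3 → ℝ,
          pd 2 (fun y => a * y 1 / (T - t) - k * y 0 / (y 0 ^ 2 + y 1 ^ 2)) y = 0 := fun y =>
        pd_eq (g := fun _ => a * y 1 / (T - t) - k * y 0 / (y 0 ^ 2 + y 1 ^ 2))
          (fun s => by simp [Function.update_apply]) (hasDerivAt_const _ _)
      exact pd_eq (g := fun _ => (0 : ℝ)) (fun s => K12 _) (hasDerivAt_const _ _)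
    rw [hT1, h10, h11, h12, hP1, hL10, hL11, hL12]
    field_simp
    ring
  · simp only [W, Matrix.cons_val_zero, Matrix.cons_val_one,
      Matrix.head_cons, Fin.sum_univ_three, Matrix.cons_val_two, Matrix.tail_cons]
    have hT2 : deriv (fun τ => -2 * a * x 2 / (T - τ)) t = -2 * a * x 2 / (T - t) ^ 2 :=
      (hdT (-2 * a * x 2) T t hr).deriv
    have h20 : pd 0 (fun y => -2 * a * y 2 / (T - t)) x = 0 :=
      pd_eq (g := fun _ => -2 * a * x 2 / (T - t))
        (fun s => by simp [Function.update_apply]) (hasDerivAt_const _ _)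
    have h21 : pd 1 (fun y => -2 * a * y 2 / (T - t)) x = 0 :=
      pd_eq (g := fun _ => -2 * a * x 2 / (T - t))
        (fun s => by simp [Function.update_apply]) (hasDerivAt_const _ _)
    have h22 : pd 2 (fun y => -2 * a * y 2 / (T - t)) x = -2 * a / (T - t) :=
      pd_eq (g := fun s => -2 * a * s / (T - t))
        (fun s => by simp [Function.update_apply]) (hdA (-2 * a) (T - t) (x 2))
    have hP2 : pd 2 (fun x => -(1 / 2) * (a ^ 2 + a) * (x 0 ^ 2 + x 1 ^ 2) / (T - t) ^ 2
          - k ^ 2 / (2 * (x 0 ^ 2 + x 1 ^ 2))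
          - 1 / 2 * (4 * a ^ 2 - 2 * a) * x 2 ^ 2 / (T - t) ^ 2) x
        = -(4 * a ^ 2 - 2 * a) * x 2 / (T - t) ^ 2 := by
      refine pd_eq (g := fun s => -(1 / 2) * (a ^ 2 + a) * (x 0 ^ 2 + x 1 ^ 2) / (T - t) ^ 2
          - k ^ 2 / (2 * (x 0 ^ 2 + x 1 ^ 2))
          - 1 / 2 * (4 * a ^ 2 - 2 * a) * s ^ 2 / (T - t) ^ 2)
        (fun s => by simp [Function.update_apply]) ?_
      have t1 := (hasDerivAt_const (x 2) (-(1 / 2) * (a ^ 2 + a) * (x 0 ^ 2 + x 1 ^ 2) / (T - t) ^ 2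
          - k ^ 2 / (2 * (x 0 ^ 2 + x 1 ^ 2)))).fun_sub
        (((hasDerivAt_pow 2 (x 2)).const_mul (1 / 2 * (4 * a ^ 2 - 2 * a))).div_const ((T - t) ^ 2))
      refine (t1).congr_deriv ?_
      field_simp
      ring
    have K20 : ∀ y : Fin 3 → ℝ, pd 0 (fun y => -2 * a * y 2 / (T - t)) y = 0 := fun y =>
      pd_eq (g := fun _ => -2 * a * y 2 / (T - t))
        (fun s => by simp [Function.update_apply]) (hasDerivAt_const _ _)
    have K21 : ∀ y : Fin 3 → ℝ, pd 1 (fun y => -2 * a * y 2 / (T - t)) y = 0 := fun y =>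
      pd_eq (g := fun _ => -2 * a * y 2 / (T - t))
        (fun s => by simp [Function.update_apply]) (hasDerivAt_const _ _)
    have K22 : ∀ y : Fin 3 → ℝ, pd 2 (fun y => -2 * a * y 2 / (T - t)) y = -2 * a / (T - t) :=
      fun y => pd_eq (g := fun s => -2 * a * s / (T - t))
        (fun s => by simp [Function.update_apply]) (hdA (-2 * a) (T - t) (y 2))
    have hL20 : pd 0 (fun y => pd 0 (fun y => -2 * a * y 2 / (T - t)) y) x = 0 :=
      pd_eq (g := fun _ => (0 : ℝ)) (fun s => K20 _) (hasDerivAt_const _ _)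
    have hL21 : pd 1 (fun y => pd 1 (fun y => -2 * a * y 2 / (T - t)) y) x = 0 :=
      pd_eq (g := fun _ => (0 : ℝ)) (fun s => K21 _) (hasDerivAt_const _ _)
    have hL22 : pd 2 (fun y => pd 2 (fun y => -2 * a * y 2 / (T - t)) y) x = 0 :=
      pd_eq (g := fun _ => -2 * a / (T - t)) (fun s => K22 _) (hasDerivAt_const _ _)
    rw [hT2, h20, h21, h22, hP2, hL20, hL21, hL22]
    field_simp
    ring
end
end

section
/- Suppose p, β ∈ ℝ are such that v₁(t,r,z) = k r^p (T*-t)^{-β} (with k ≠ 0) solves ∂ₜv₁ + v^r ∂_r v₁ + v^z ∂_z v₁ = ν(∂_r² + (3/r)∂_r + ∂_z²)v₁ + 2v₁ ∂_z φ₁ for all t ∈ [0,T*), r > 0, z ∈ ℝ, where v^r = a r/(T*-t), v^z = -2a z/(T*-t), φ₁ = -a z/(T*-t), a ≠ 0, ν > 0. Then (p,β) = (-2,0) or (p,β) = (0,-2a). -/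
lemma aux_d1 (k c p : ℝ) {r : ℝ} (hr : 0 < r) :
    HasDerivAt (fun r' : ℝ => k * r' ^ p * c) (k * (p * r ^ (p - 1)) * c) r := by
  have h := Real.hasDerivAt_rpow_const (x := r) (p := p) (Or.inl hr.ne')
  exact (h.const_mul k).mul_const c

lemma aux_d2 (k c p : ℝ) {r : ℝ} (hr : 0 < r) :
    deriv (deriv (fun r' : ℝ => k * r' ^ p * c)) r
      = k * p * ((p - 1) * r ^ (p - 2)) * c := by
  have hev : deriv (fun r' : ℝ => k * r' ^ p * c)
      =ᶠ[nhds r] fun r' => (k * p) * r' ^ (p - 1) * c := by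
    filter_upwards [eventually_gt_nhds hr] with x hx
    rw [(aux_d1 k c p hx).deriv]; ring
  rw [Filter.EventuallyEq.deriv_eq hev, (aux_d1 (k * p) c (p - 1) hr).deriv]
  have : p - 1 - 1 = p - 2 := by ring
  rw [this]

lemma aux_dt (k c β T : ℝ) {t : ℝ} (ht : t < T) :
    deriv (fun τ : ℝ => k * c * (T - τ) ^ (-β)) t
      = k * c * (β * (T - t) ^ (-β - 1)) := by
  have hs : (0:ℝ) < T - t := by linarith
  have hin : HasDerivAt (fun τ : ℝ => T - τ) (-1) t := by
    simpa using (hasDerivAt_id t).const_sub T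
  have h := (Real.hasDerivAt_rpow_const (x := T - t) (p := -β) (Or.inl hs.ne')).comp t hin
  have h2 := (h.const_mul (k * c))
  have : k * c * (-β * (T - t) ^ (-β - 1) * -1) = k * c * (β * (T - t) ^ (-β - 1)) := by ring
  rw [← this]
  exact h2.deriv

/-- If the power ansatz v₁ = k rᵖ (T-t)^{-β} solves the transformed angular
momentum equation, then (p,β) = (-2,0) or (p,β) = (0,-2a). -/
theorem stmt_8 (T ν a k p β : ℝ) (hT : 0 < T) (hν : 0 < ν) (ha : a ≠ 0) (hk : k ≠ 0)
    (heq : ∀ t r z : ℝ, 0 ≤ t → t < T → 0 < r →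
      deriv (fun τ => k * r ^ p * (T - τ) ^ (-β)) t
        + (a * r / (T - t)) * deriv (fun r' => k * r' ^ p * (T - t) ^ (-β)) r
        + (-2 * a * z / (T - t)) * deriv (fun _ : ℝ => k * r ^ p * (T - t) ^ (-β)) z
      = ν * (deriv (deriv (fun r' => k * r' ^ p * (T - t) ^ (-β))) r
          + (3 / r) * deriv (fun r' => k * r' ^ p * (T - t) ^ (-β)) r
          + deriv (deriv (fun _ : ℝ => k * r ^ p * (T - t) ^ (-β))) z)
        + 2 * (k * r ^ p * (T - t) ^ (-β)) * deriv (fun z' => -a * z' / (T - t)) z) :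
    (p = -2 ∧ β = 0) ∨ (p = 0 ∧ β = -2 * a) := by
  have key : ∀ t, 0 ≤ t → t < T → β + a * p + 2 * a = ν * (p ^ 2 + 2 * p) * (T - t) := by
    intro t ht htT
    have hs : (0:ℝ) < T - t := by linarith
    have H := heq t 1 0 ht htT one_pos
    rw [aux_dt k (1 ^ p) β T htT] at H
    rw [(aux_d1 k ((T - t) ^ (-β)) p one_pos).deriv] at H
    rw [aux_d2 k ((T - t) ^ (-β)) p one_pos] at H
    simp only [deriv_const, deriv_const'] at H
    have hdz : deriv (fun z' : ℝ => -a * z' / (T - t)) 0 = -a / (T - t) := by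
      have : HasDerivAt (fun z' : ℝ => -a * z' / (T - t)) (-a * 1 / (T - t)) 0 :=
        ((hasDerivAt_id (0:ℝ)).const_mul (-a)).div_const (T - t)
      simpa using this.deriv
    rw [hdz] at H
    simp only [Real.one_rpow, Pi.zero_apply] at H
    have hAB : (T - t) ^ (-β) = (T - t) * (T - t) ^ (-β - 1) := by
      have h := Real.rpow_add hs 1 (-β - 1)
      rw [Real.rpow_one] at h
      rw [← h]; congr 1; ring
    rw [hAB] at H
    have hA : (T - t) ^ (-β - 1) ≠ 0 := (Real.rpow_pos_of_pos hs _).ne'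
    field_simp at H
    have h2 : (k * (T - t) ^ (-β - 1) * (T - t)) * (β + a * p + 2 * a)
        = (k * (T - t) ^ (-β - 1) * (T - t)) * (ν * (p ^ 2 + 2 * p) * (T - t)) := by
      linear_combination H
    exact mul_left_cancel₀ (mul_ne_zero (mul_ne_zero hk hA) hs.ne') h2
  have h1 := key 0 le_rfl hT
  have h2 := key (T / 2) (by linarith) (by linarith)
  have h4 : ν * (p ^ 2 + 2 * p) * (T / 2) = 0 := by
    linear_combination h2 - h1
  have hc : ν * (p ^ 2 + 2 * p) = 0 := by
    rcases mul_eq_zero.mp h4 with h | h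
    · exact h
    · linarith
  have hp : p ^ 2 + 2 * p = 0 := by
    rcases mul_eq_zero.mp hc with h | h
    · exact absurd h hν.ne'
    · exact h
  have hβ : β = -a * p - 2 * a := by
    rw [hc] at h1; linarith
  have : p * (p + 2) = 0 := by nlinarith
  rcases mul_eq_zero.mp this with h | h
  · right; constructor
    · exact h
    · rw [hβ, h]; ring
  · left; constructor
    · linarith
    · rw [hβ]; have : p = -2 := by linarith
      rw [this]; ring
end
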